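/- arXiv:1309.0683 — 3 statements merged into one kernel-verified Lean document; each statement's English description precedes it below -/
import Mathlib

section
/- Let C be a cycle with labeling γ : V(C) → ℤ such that adjacent vertices differ in γ by exactly 1, and suppose C has exactly one local minimum u and exactly one local maximum z. Then both paths connecting u and z along C are monotone, and the length of each path equals γ(z) − γ(u). -/
/-- `i` is a local minimum of the labeled `n`-cycle `β` (its two cycle-neighbors,
`i+1` and `i-1 ≡ i+(n-1)`, have label one larger). -/
def LocMin (β : ℕ → ℤ) (n i : ℕ) : Prop :=
  β (i + (n - 1)) = β i + 1 ∧ β (i + 1) = β i + 1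

/-- `i` is a local maximum of the labeled `n`-cycle `β`. -/
def LocMax (β : ℕ → ℤ) (n i : ℕ) : Prop :=
  β (i + (n - 1)) = β i - 1 ∧ β (i + 1) = β i - 1

/-- `i` attains the minimum label on the (periodic) cycle. -/
def GlobMin (β : ℕ → ℤ) (i : ℕ) : Prop := ∀ j, β i ≤ β j

/-- `i` attains the maximum label on the (periodic) cycle. -/
def GlobMax (β : ℕ → ℤ) (i : ℕ) : Prop := ∀ j, β j ≤ β i

/-- The arc of `d` edges starting at `i` is monotone: labels increase by 1 at each step. -/
def MonoArc (β : ℕ → ℤ) (i d : ℕ) : Prop := ∀ t < d, β (i + t + 1) = β (i + t) + 1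

/-- The arc of `d` edges starting at `i` has labels decreasing by 1 at each step. -/
def AntiArc (β : ℕ → ℤ) (i d : ℕ) : Prop := ∀ t < d, β (i + t + 1) = β (i + t) - 1

/-- Every internal vertex of the arc of `d` edges starting at `i` has label strictly
between `lo` and `hi`. -/
def BetweenArc (β : ℕ → ℤ) (i d : ℕ) (lo hi : ℤ) : Prop :=
  ∀ t, 0 < t → t < d → lo < β (i + t) ∧ β (i + t) < hi


private lemma mono_sum' (β : ℕ → ℤ) (i : ℕ) : ∀ m, MonoArc β i m → β (i + m) = β i + m := by
  intro m
  induction m with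
  | zero => simp
  | succ k ih =>
    intro h
    have h1 : MonoArc β i k := fun t ht => h t (by omega)
    have h2 := h k (by omega)
    have h3 : i + (k+1) = i + k + 1 := by omega
    rw [h3, h2, ih h1]
    push_cast; ring

private lemma anti_sum' (β : ℕ → ℤ) (i : ℕ) : ∀ m, AntiArc β i m → β (i + m) = β i - m := by
  intro m
  induction m with
  | zero => simp
  | succ k ih =>
    intro h
    have h1 : AntiArc β i k := fun t ht => h t (by omega)
    have h2 := h k (by omega)
    have h3 : i + (k+1) = i + k + 1 := by omega
    rw [h3, h2, ih h1]
    push_cast; ring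

private lemma beta_mod' (n : ℕ) (hn : 0 < n) (β : ℕ → ℤ) (hper : ∀ i, β (i + n) = β i) :
    ∀ k, β k = β (k % n) := by
  intro k
  induction k using Nat.strong_induction_on with
  | _ k ih =>
    rcases Nat.lt_or_ge k n with h | h
    · rw [Nat.mod_eq_of_lt h]
    · obtain ⟨m, rfl⟩ := Nat.exists_eq_add_of_le h
      rw [Nat.add_comm n m, hper m, Nat.add_mod_right]
      exact ih m (by omega)

/-- if a ±1-labeled cycle has exactly one local minimum `u` and exactly one
local maximum `z`, then both arcs connecting `u` and `z` are monotone (as paths from `u`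
to `z`), and each has length `γ(z) - γ(u)`. -/
theorem stmt_6 (n : ℕ) (hn : 3 ≤ n) (β : ℕ → ℤ)
    (hper : ∀ i, β (i + n) = β i) (hstep : ∀ i, |β (i + 1) - β i| = 1)
    (u z : ℕ) (hun : u < n) (hzn : z < n)
    (humin : LocMin β n u) (hzmax : LocMax β n z)
    (huuniq : ∀ i < n, LocMin β n i → i = u)
    (hzuniq : ∀ i < n, LocMax β n i → i = z) :
    ∃ d e : ℕ, 0 < d ∧ 0 < e ∧ d + e = n ∧
      (u + d) % n = z % n ∧ (z + e) % n = u % n ∧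
      MonoArc β u d ∧ AntiArc β z e ∧
      (d : ℤ) = β z - β u ∧ (e : ℤ) = β z - β u := by
  have hn0 : 0 < n := by omega
  have hmod := beta_mod' n hn0 β hper
  have hcong : ∀ a b : ℕ, a % n = b % n → β a = β b := by
    intro a b h; rw [hmod a, hmod b, h]
  have hstep' : ∀ i, β (i+1) = β i + 1 ∨ β (i+1) = β i - 1 := by
    intro i
    have h := hstep i
    rcases (abs_eq (by norm_num : (0:ℤ) ≤ 1)).mp h with h | h
    · left; linarith
    · right; linarith
  -- d : first down-step after u
  have hex : ∃ t, β (u + t + 1) = β (u + t) - 1 := by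
    by_contra hno
    push_neg at hno
    have hm : MonoArc β u n := by
      intro t _
      rcases hstep' (u+t) with h | h
      · exact h
      · exact absurd h (hno t)
    have h2 := mono_sum' β u n hm
    rw [hper u] at h2
    omega
  set d := Nat.find hex with hd
  have hdspec : β (u + d + 1) = β (u + d) - 1 := Nat.find_spec hex
  have hmono : MonoArc β u d := by
    intro t ht
    rcases hstep' (u+t) with h | h
    · exact h
    · exact absurd h (Nat.find_min hex ht)
  have hd1 : 0 < d := by
    rcases Nat.eq_zero_or_pos d with h | h
    · rw [h] at hdspec; simp at hdspec
      have := humin.2; omega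
    · exact h
  have hdn : d < n := by
    by_contra h
    push_neg at h
    have hm : MonoArc β u n := fun t ht => hmono t (by omega)
    have h2 := mono_sum' β u n hm
    rw [hper u] at h2
    omega
  -- e : first up-step after z
  have hex2 : ∃ t, β (z + t + 1) = β (z + t) + 1 := by
    by_contra hno
    push_neg at hno
    have hm : AntiArc β z n := by
      intro t _
      rcases hstep' (z+t) with h | h
      · exact absurd h (hno t)
      · exact h
    have h2 := anti_sum' β z n hm
    rw [hper z] at h2
    omega
  set e := Nat.find hex2 with he
  have hespec : β (z + e + 1) = β (z + e) + 1 := Nat.find_spec hex2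
  have hanti : AntiArc β z e := by
    intro t ht
    rcases hstep' (z+t) with h | h
    · exact absurd h (Nat.find_min hex2 ht)
    · exact h
  have he1 : 0 < e := by
    rcases Nat.eq_zero_or_pos e with h | h
    · rw [h] at hespec; simp at hespec
      have := hzmax.2; omega
    · exact h
  have hen : e < n := by
    by_contra h
    push_neg at h
    have hm : AntiArc β z n := fun t ht => hanti t (by omega)
    have h2 := anti_sum' β z n hm
    rw [hper z] at h2
    omega
  -- (u+d) % n is a local max, hence equals z
  set j := (u + d) % n with hjdef
  have hjn : j < n := Nat.mod_lt _ hn0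
  have hjeq : β j = β (u + d) := hcong _ _ (Nat.mod_mod_of_dvd _ dvd_rfl)
  have hprev : β (u + d) = β (u + d - 1) + 1 := by
    have h := hmono (d-1) (by omega)
    have h2 : u + (d-1) + 1 = u + d := by omega
    have h3 : u + (d-1) = u + d - 1 := by omega
    rw [h2, h3] at h
    exact h
  have hjmax : LocMax β n j := by
    constructor
    · have e1 : (j + (n-1)) % n = (u + d - 1) % n := by
        calc (j + (n-1)) % n = ((u+d) + (n-1)) % n := Nat.mod_add_mod _ _ _
          _ = ((u+d-1) + n) % n := by congr 1; omega
          _ = (u+d-1) % n := Nat.add_mod_right _ _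
      have := hcong _ _ e1
      rw [this, hjeq]
      omega
    · have e1 : (j + 1) % n = (u + d + 1) % n := Nat.mod_add_mod _ _ _
      have := hcong _ _ e1
      rw [this, hjeq]
      omega
  have hjz : j = z := hzuniq j hjn hjmax
  -- (z+e) % n is a local min, hence equals u
  set j' := (z + e) % n with hj'def
  have hj'n : j' < n := Nat.mod_lt _ hn0
  have hj'eq : β j' = β (z + e) := hcong _ _ (Nat.mod_mod_of_dvd _ dvd_rfl)
  have hprev' : β (z + e) = β (z + e - 1) - 1 := by
    have h := hanti (e-1) (by omega)
    have h2 : z + (e-1) + 1 = z + e := by omega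
    have h3 : z + (e-1) = z + e - 1 := by omega
    rw [h2, h3] at h
    exact h
  have hj'min : LocMin β n j' := by
    constructor
    · have e1 : (j' + (n-1)) % n = (z + e - 1) % n := by
        calc (j' + (n-1)) % n = ((z+e) + (n-1)) % n := Nat.mod_add_mod _ _ _
          _ = ((z+e-1) + n) % n := by congr 1; omega
          _ = (z+e-1) % n := Nat.add_mod_right _ _
      have := hcong _ _ e1
      rw [this, hj'eq]
      omega
    · have e1 : (j' + 1) % n = (z + e + 1) % n := Nat.mod_add_mod _ _ _
      have := hcong _ _ e1
      rw [this, hj'eq]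
      omega
  have hj'u : j' = u := huuniq j' hj'n hj'min
  -- d + e = n
  have hmodz : (u + d) % n = z % n := by rw [← hjdef, hjz, Nat.mod_eq_of_lt hzn]
  have hmodu : (z + e) % n = u % n := by rw [← hj'def, hj'u, Nat.mod_eq_of_lt hun]
  have hsum : (u + d + e) % n = u % n := by
    calc (u + d + e) % n = ((u+d) % n + e) % n := (Nat.mod_add_mod _ _ _).symm
      _ = (z % n + e) % n := by rw [hmodz]
      _ = (z + e) % n := Nat.mod_add_mod _ _ _
      _ = u % n := hmodu
  have hdvd : n ∣ d + e := by
    have h := (Nat.modEq_iff_dvd' (by omega : u ≤ u + d + e)).mp hsum.symm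
    have h2 : u + d + e - u = d + e := by omega
    rwa [h2] at h
  have hde : d + e = n := by
    obtain ⟨k, hk⟩ := hdvd
    rcases k with _ | _ | k
    · omega
    · omega
    · exfalso; nlinarith
  -- label equalities
  have hms := mono_sum' β u d hmono
  have has := anti_sum' β z e hanti
  have hbz : β (u + d) = β z := by rw [← hjeq, hjz]
  have hbu : β (z + e) = β u := by rw [← hj'eq, hj'u]
  refine ⟨d, e, hd1, he1, hde, hmodz, hmodu, hmono, hanti, ?_, ?_⟩ <;> omega
end

section
/- Let (G, γ) be a strict instance on a 2-connected plane graph, let f be a face, and suppose a face g ≠ f and all its boundary vertices are unchanged when new vertices and edges are added inside f (splitting f into new faces). Then for each vertex u incident to g, u is a local minimum (resp. local maximum, global minimum, global maximum) for g after the augmentation if and only if it was before. Consequently n(g) is unchanged, and n(G⁺) − n(G) = Σᵢ n(fᵢ) − n(f), where f₁,…,f_r are the faces into which f is split. -/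
/-- Visibility on a labeled `n`-cycle: a local minimum `i` and local maximum `j` are
visible if one of the two arcs connecting them has all internal labels strictly between
`β i` and `β j`. -/
def Visible (β : ℕ → ℤ) (n i j : ℕ) : Prop :=
  ∃ d, 0 < d ∧ d < n ∧
    (((i + d) % n = j % n ∧ BetweenArc β i d (β i) (β j)) ∨
     ((j + d) % n = i % n ∧ BetweenArc β j d (β i) (β j)))

/-- A labeled cycle is jagged: every local minimum is a global minimum and every local
maximum is a global maximum. -/
def JaggedCycle (β : ℕ → ℤ) (n : ℕ) : Prop :=
  ∀ i, (LocMin β n i → GlobMin β i) ∧ (LocMax β n i → GlobMax β i)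

/-- A labeled cycle is quasi-jagged: any visible local minimum and local maximum are
connected by a monotone arc along the cycle. -/
def QuasiJaggedCycle (β : ℕ → ℤ) (n : ℕ) : Prop :=
  ∀ i j, i < n → j < n → LocMin β n i → LocMax β n j → Visible β n i j →
    ∃ d, 0 < d ∧ d < n ∧
      (((i + d) % n = j % n ∧ MonoArc β i d) ∨
       ((j + d) % n = i % n ∧ AntiArc β j d))

/-- A (2-connected) plane graph presented by its faces: each face `f` has a boundary
cycle of length `len f`, given as a periodic sequence of vertices. -/
structure PlaneFaces (V F : Type) where
  G : SimpleGraph V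
  len : F → ℕ
  bnd : F → ℕ → V
  len_ge : ∀ f, 3 ≤ len f
  periodic : ∀ f i, bnd f (i + len f) = bnd f i
  inj : ∀ f, ∀ i < len f, ∀ j < len f, bnd f i = bnd f j → i = j
  adj : ∀ f i, G.Adj (bnd f i) (bnd f (i + 1))

/-- The labeling of the boundary cycle of face `f` induced by `γ`. -/
def faceLabel {V F : Type} (P : PlaneFaces V F) (γ : V → ℤ) (f : F) : ℕ → ℤ :=
  fun i => γ (P.bnd f i)

/-- A strict instance: `γ` differs by exactly 1 on every edge. -/
def Strict {V : Type} (G : SimpleGraph V) (γ : V → ℤ) : Prop :=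
  ∀ u v, G.Adj u v → |γ u - γ v| = 1

/-- `n(g)`: the number of vertices of the boundary cycle that are local-but-not-global
minima, plus those that are local-but-not-global maxima. -/
noncomputable def nFace (β : ℕ → ℤ) (n : ℕ) : ℕ :=
  Nat.card {i : ℕ // i < n ∧
    ((LocMin β n i ∧ ¬ GlobMin β i) ∨ (LocMax β n i ∧ ¬ GlobMax β i))}

/-- if vertices and edges are added inside a face `f` of `(G, γ)`
(splitting `f` into new faces indexed by `F2` and leaving every other face `g ≠ f` and
its boundary intact), then for each vertex on the boundary of such a face `g`, being a
local/global minimum/maximum for `g` is unchanged; consequently `n(g)` is unchanged and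
`n(G⁺) + n(f) = n(G) + Σᵢ n(fᵢ)`, where `f₁, …, f_r` are the faces into which `f` is
split. -/
theorem stmt_14 {V W F F2 : Type} [Fintype F] [DecidableEq F] [Fintype F2]
    (P : PlaneFaces V F) (γ : V → ℤ) (hstrict : Strict P.G γ) (f : F)
    (P' : PlaneFaces (V ⊕ W) ({g : F // g ≠ f} ⊕ F2)) (δ : W → ℤ)
    (hstrict' : Strict P'.G (Sum.elim γ δ))
    (hG : ∀ u v : V, P.G.Adj u v → P'.G.Adj (Sum.inl u) (Sum.inl v))
    (hlen : ∀ g : {g : F // g ≠ f}, P'.len (Sum.inl g) = P.len g.1)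
    (hbnd : ∀ g : {g : F // g ≠ f}, ∀ i, P'.bnd (Sum.inl g) i = Sum.inl (P.bnd g.1 i)) :
    (∀ g : {g : F // g ≠ f}, ∀ i,
      (LocMin (faceLabel P' (Sum.elim γ δ) (Sum.inl g)) (P'.len (Sum.inl g)) i ↔
        LocMin (faceLabel P γ g.1) (P.len g.1) i) ∧
      (LocMax (faceLabel P' (Sum.elim γ δ) (Sum.inl g)) (P'.len (Sum.inl g)) i ↔
        LocMax (faceLabel P γ g.1) (P.len g.1) i) ∧
      (GlobMin (faceLabel P' (Sum.elim γ δ) (Sum.inl g)) i ↔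
        GlobMin (faceLabel P γ g.1) i) ∧
      (GlobMax (faceLabel P' (Sum.elim γ δ) (Sum.inl g)) i ↔
        GlobMax (faceLabel P γ g.1) i)) ∧
    (∀ g : {g : F // g ≠ f},
      nFace (faceLabel P' (Sum.elim γ δ) (Sum.inl g)) (P'.len (Sum.inl g)) =
        nFace (faceLabel P γ g.1) (P.len g.1)) ∧
    ((∑ h : {g : F // g ≠ f} ⊕ F2, nFace (faceLabel P' (Sum.elim γ δ) h) (P'.len h)) +
        nFace (faceLabel P γ f) (P.len f) =
      (∑ g : F, nFace (faceLabel P γ g) (P.len g)) +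
        ∑ h : F2, nFace (faceLabel P' (Sum.elim γ δ) (Sum.inr h)) (P'.len (Sum.inr h))) := by
  have key : ∀ g : {g : F // g ≠ f},
      faceLabel P' (Sum.elim γ δ) (Sum.inl g) = faceLabel P γ g.1 := by
    intro g; funext i; simp [faceLabel, hbnd]
  have keyN : ∀ g : {g : F // g ≠ f},
      nFace (faceLabel P' (Sum.elim γ δ) (Sum.inl g)) (P'.len (Sum.inl g)) =
        nFace (faceLabel P γ g.1) (P.len g.1) := by
    intro g; rw [key g, hlen g]
  refine ⟨fun g i => by rw [key g, hlen g]; exact ⟨Iff.rfl, Iff.rfl, Iff.rfl, Iff.rfl⟩,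
    keyN, ?_⟩
  rw [Fintype.sum_sum_type]
  simp only [keyN]
  have hsplit : ∑ g : F, nFace (faceLabel P γ g) (P.len g) =
      nFace (faceLabel P γ f) (P.len f) +
        ∑ g : {g : F // g ≠ f}, nFace (faceLabel P γ g.1) (P.len g.1) := by
    rw [Fintype.sum_eq_add_sum_compl f]
    congr 1
    exact (Finset.sum_subtype (p := fun g => g ≠ f) ({f}ᶜ : Finset F)
      (fun x => by simp [Finset.mem_compl]) (fun g => nFace (faceLabel P γ g) (P.len g)))
  rw [hsplit]; ring
end

section
/- Let f be a face of a 2-connected plane graph with strict labeling γ, whose boundary cycle C_f is split by inserting inside f a monotone path from a vertex v″ on C_f to a global maximum z of f, where γ(v″) equals the minimum γ-value γ(v′) among internal local minima of the path Q from the unique global minimum u to z containing v″, and the subpath of Q from u to v″ is monotone. Let f₁ be the new face bounded by the inserted path and the subpath of Q between v″ and z, and f₂ the other new face. If the other path P of C_f from u to z is monotone, then n(f₁) + n(f₂) ≤ n(f) − 1, where n(g) counts local-but-not-global minima plus local-but-not-global maxima of face g. -/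
/-- The boundary labeling of the face `f₁` created in Case 1: the subpath of `Q` from
`v″` (at position `s`) up to `z` (at position `q`), closed by the inserted monotone path
from `v″` to `z` (of `m = β q - β s` edges), traversed back from `z`. -/
noncomputable def beta1 (β : ℕ → ℤ) (q s : ℕ) : ℕ → ℤ := fun i =>
  let m := (β q - β s).toNat
  let j := i % ((q - s) + m)
  if j ≤ q - s then β (s + j) else β q - ((j : ℤ) - ((q : ℤ) - (s : ℤ)))

/-- The boundary labeling of the face `f₂` created in Case 1: the monotone subpath of `Q`
from `u` (at position `0`) to `v″` (at position `s`), then the inserted monotone path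
from `v″` up to `z`, then the monotone path `P` from `z` back to `u`. -/
noncomputable def beta2 (β : ℕ → ℤ) (n q s : ℕ) : ℕ → ℤ := fun i =>
  let m := (β q - β s).toNat
  let j := i % (s + m + (n - q))
  if j ≤ s then β j
  else if j ≤ s + m then β s + ((j : ℤ) - (s : ℤ))
  else β (q + (j - (s + m)))

/-- Case 1 of the quasi-jagged-to-jagged reduction. The boundary of face
`f` is the `n`-cycle `β` with unique global minimum `u` at position `0` and unique global
maximum `z` at position `q`; the arc `P` from `z` back to `u` is monotone; `Q` is the arc
from `u` to `z` through positions `0, …, q`; the vertex `v″` sits at position `s` on `Q`,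
the subpath of `Q` from `u` to `v″` is monotone, and `β s` equals the minimum label
`β v′` among the internal local minima of `Q`. Inserting a monotone path from `v″` to `z`
inside `f` splits it into faces `f₁` and `f₂`, and `n(f₁) + n(f₂) ≤ n(f) - 1`. -/
theorem stmt_19 (n : ℕ) (hn : 3 ≤ n) (β : ℕ → ℤ)
    (hper : ∀ i, β (i + n) = β i) (hstep : ∀ i, |β (i + 1) - β i| = 1)
    (q s : ℕ) (hq0 : 0 < q) (hqn : q < n) (hs0 : 0 < s) (hsq : s < q)
    -- u (position 0) is the unique global minimum of f
    (humin : GlobMin β 0) (huuniq : ∀ i < n, GlobMin β i → i = 0)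
    -- z (position q) is the unique global maximum of f
    (hzmax : GlobMax β q) (hzuniq : ∀ i < n, GlobMax β i → i = q)
    -- the path P from z back to u is monotone
    (hP : AntiArc β q (n - q))
    -- the subpath of Q from u to v″ (position s) is monotone
    (hQus : MonoArc β 0 s)
    -- β s equals the minimum value among the internal local minima of Q
    (hmin_le : ∀ t, 0 < t → t < q →
      (β (t - 1) = β t + 1 ∧ β (t + 1) = β t + 1) → β s ≤ β t)
    (hmin_ex : ∃ t, 0 < t ∧ t < q ∧
      (β (t - 1) = β t + 1 ∧ β (t + 1) = β t + 1) ∧ β t = β s)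
    (hlt : β s < β q) :
    nFace (beta1 β q s) ((q - s) + (β q - β s).toNat) +
        nFace (beta2 β n q s) (s + (β q - β s).toNat + (n - q)) + 1 ≤
      nFace β n := by
  
  have hqsle : s ≤ q := hsq.le
  set m := (β q - β s).toNat with hm
  have hmz : (m : ℤ) = β q - β s := Int.toNat_of_nonneg (by linarith)
  have hm1 : 1 ≤ m := by omega
  set N1 := (q - s) + m with hN1
  set N2 := s + m + (n - q) with hN2
  have hstep' : ∀ i, β (i + 1) = β i + 1 ∨ β (i + 1) = β i - 1 := by
    intro i
    have h := hstep i
    rcases (abs_eq (by norm_num : (0:ℤ) ≤ 1)).mp h with h' | h'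
    · left; omega
    · right; omega
  have hQval : ∀ t, t ≤ s → β t = β 0 + t := by
    intro t
    induction t with
    | zero => simp
    | succ k ih =>
      intro hk
      have h1 := hQus k (by omega)
      simp only [zero_add] at h1
      have h2 := ih (by omega)
      push_cast
      omega
  have hbs : β s = β 0 + s := hQval s le_rfl
  have hPval : ∀ t, t ≤ n - q → β (q + t) = β q - t := by
    intro t
    induction t with
    | zero => simp
    | succ k ih =>
      intro hk
      have h1 := hP k (by omega)
      have h2 := ih (by omega)
      rw [show q + (k + 1) = q + k + 1 by omega]
      push_cast
      omega
  have hβn : β n = β 0 := by have := hper 0; simpa using this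
  have hn0 : β 0 = β q - ((n - q : ℕ) : ℤ) := by
    have h := hPval (n - q) le_rfl
    rw [show q + (n - q) = n by omega, hβn] at h
    exact h
  have hmaxlt : ∀ t, t < n → t ≠ q → β t < β q := by
    intro t htn htq
    rcases lt_or_eq_of_le (hzmax t) with h | h
    · exact h
    · exact absurd (hzuniq t htn (fun j => (hzmax j).trans_eq h.symm)) htq
  have hminlt : ∀ t, t < n → t ≠ 0 → β 0 < β t := by
    intro t htn htq
    rcases lt_or_eq_of_le (humin t) with h | h
    · exact h
    · exact absurd (huuniq t htn (fun j => h.ge.trans (humin j))) htq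
  have hA : ∀ t, s ≤ t → t ≤ q → β s ≤ β t := by
    have hne : (Finset.Icc s q).Nonempty := ⟨s, by simp [hqsle]⟩
    obtain ⟨t₁, ht₁m, ht₁min⟩ := Finset.exists_min_image (Finset.Icc s q) β hne
    simp only [Finset.mem_Icc] at ht₁m
    have key : β s ≤ β t₁ := by
      rcases eq_or_lt_of_le ht₁m.1 with h | h
      · rw [← h]
      · rcases eq_or_lt_of_le ht₁m.2 with h2 | h2
        · rw [h2]; exact hlt.le
        · have hl : β t₁ ≤ β (t₁ - 1) :=
            ht₁min _ (Finset.mem_Icc.mpr ⟨by omega, by omega⟩)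
          have hr : β t₁ ≤ β (t₁ + 1) :=
            ht₁min _ (Finset.mem_Icc.mpr ⟨by omega, by omega⟩)
          have s1 := hstep' (t₁ - 1)
          rw [show t₁ - 1 + 1 = t₁ by omega] at s1
          have s2 := hstep' t₁
          exact hmin_le t₁ (by omega) h2 ⟨by omega, by omega⟩
    intro t hst htq
    exact key.trans (ht₁min t (Finset.mem_Icc.mpr ⟨hst, htq⟩))
  have hs1 : β (s + 1) = β s + 1 := by
    have h := hA (s + 1) (by omega) (by omega)
    rcases hstep' s with h' | h'
    · exact h'
    · omega
  have hq1 : β (q - 1) = β q - 1 := by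
    have h0 := hzmax (q - 1)
    have h := hstep' (q - 1)
    rw [show q - 1 + 1 = q by omega] at h
    omega
  have hper' : ∀ i, 1 ≤ i → β (i + (n - 1)) = β (i - 1) := by
    intro i hi
    rw [show i + (n - 1) = (i - 1) + n by omega, hper]
  obtain ⟨t₀, ht₀0, ht₀q, ⟨ht₀l, ht₀r⟩, ht₀v⟩ := hmin_ex
  have hst₀ : s < t₀ := by
    by_contra h
    push_neg at h
    have h1 := hQval t₀ h
    have h2 := hQval (t₀ - 1) (by omega)
    omega
  -- evaluation lemmas for beta1
  have hb1a : ∀ i, i ≤ q - s → beta1 β q s i = β (s + i) := by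
    intro i hi
    simp only [beta1]
    rw [← hm, ← hN1, Nat.mod_eq_of_lt (by omega), if_pos hi]
  have hb1c : ∀ i, q - s ≤ i → i < N1 →
      beta1 β q s i = β q - ((i : ℤ) - ((q : ℤ) - (s : ℤ))) := by
    intro i h1 h2
    rcases eq_or_lt_of_le h1 with h | h
    · rw [hb1a i (by omega), show s + i = q by omega]
      omega
    · simp only [beta1]
      rw [← hm, ← hN1, Nat.mod_eq_of_lt (by omega), if_neg (by omega)]
  have hb1per : ∀ j, beta1 β q s (j + N1) = beta1 β q s j := by
    intro j
    simp only [beta1]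
    rw [← hm, ← hN1, Nat.add_mod_right]
  have hb1bd : ∀ j, β s ≤ beta1 β q s j ∧ beta1 β q s j ≤ β q := by
    intro j
    have hj : j % N1 < N1 := Nat.mod_lt _ (by omega)
    have e : beta1 β q s j = beta1 β q s (j % N1) := by
      simp only [beta1]
      rw [← hm, ← hN1, Nat.mod_mod_of_dvd j dvd_rfl]
    by_cases h : j % N1 ≤ q - s
    · rw [e, hb1a _ h]
      exact ⟨hA _ (by omega) (by omega), hzmax _⟩
    · rw [e, hb1c _ (by omega) hj]
      constructor
      · omega
      · omega
  have hgmin1 : GlobMin (beta1 β q s) 0 := by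
    intro j
    have e0 : beta1 β q s 0 = β s := by rw [hb1a 0 (by omega), Nat.add_zero]
    rw [e0]; exact (hb1bd j).1
  have hgmax1 : GlobMax (beta1 β q s) (q - s) := by
    intro j
    have e0 : beta1 β q s (q - s) = β q := by
      rw [hb1a _ le_rfl, show s + (q - s) = q by omega]
    rw [e0]; exact (hb1bd j).2
  -- key lemma for beta1's counted indices
  have hkey1 : ∀ i, i < N1 →
      ((LocMin (beta1 β q s) N1 i ∧ ¬ GlobMin (beta1 β q s) i) ∨
        (LocMax (beta1 β q s) N1 i ∧ ¬ GlobMax (beta1 β q s) i)) →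
      0 < i ∧ i < q - s ∧
        (s + i < n ∧ ((LocMin β n (s + i) ∧ ¬ GlobMin β (s + i)) ∨
          (LocMax β n (s + i) ∧ ¬ GlobMax β (s + i)))) ∧ s + i ≠ t₀ := by
    intro i hiN hc
    have hprev : 1 ≤ i → beta1 β q s (i + (N1 - 1)) = beta1 β q s (i - 1) := by
      intro hi
      rw [show i + (N1 - 1) = (i - 1) + N1 by omega, hb1per]
    rcases Nat.eq_zero_or_pos i with h0 | h0
    · exfalso
      subst h0
      have e1 : beta1 β q s (0 + 1) = β (s + 1) := by
        rw [zero_add, hb1a 1 (by omega)]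
      have e0 : beta1 β q s 0 = β s := by rw [hb1a 0 (by omega), Nat.add_zero]
      rcases hc with ⟨_, hng⟩ | ⟨⟨_, h2⟩, _⟩
      · exact hng hgmin1
      · rw [e1, e0, hs1] at h2
        omega
    rcases lt_trichotomy i (q - s) with hlt1 | heq1 | hgt1
    · -- the genuine case 0 < i < q - s
      have ep : beta1 β q s (i - 1) = β (s + i - 1) := by
        rw [hb1a (i - 1) (by omega)]
        congr 1
        omega
      have e0 : beta1 β q s i = β (s + i) := hb1a i (by omega)
      have en : beta1 β q s (i + 1) = β (s + i + 1) := by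
        rw [hb1a (i + 1) (by omega), show s + (i + 1) = s + i + 1 by omega]
      have hpn : β (s + i + (n - 1)) = β (s + i - 1) := hper' (s + i) (by omega)
      refine ⟨h0, hlt1, ⟨by omega, ?_⟩, ?_⟩
      · rcases hc with ⟨⟨h1, h2⟩, hng⟩ | ⟨⟨h1, h2⟩, hng⟩
        · rw [hprev h0, ep, e0] at h1
          rw [en, e0] at h2
          refine Or.inl ⟨⟨by rw [hpn]; exact h1, h2⟩, ?_⟩
          intro hg
          have := hminlt (s + i) (by omega) (by omega)
          have := hg 0
          omega
        · rw [hprev h0, ep, e0] at h1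
          rw [en, e0] at h2
          refine Or.inr ⟨⟨by rw [hpn]; exact h1, h2⟩, ?_⟩
          intro hg
          have := hmaxlt (s + i) (by omega) (by omega)
          have := hg q
          omega
      · rcases hc with ⟨⟨h1, h2⟩, hng⟩ | ⟨⟨h1, h2⟩, hng⟩
        · have hne : β (s + i) ≠ β s := by
            intro h
            exact hng (fun j => by rw [e0, h]; exact (hb1bd j).1)
          intro he
          rw [he, ht₀v] at hne
          exact hne rfl
        · rw [en, e0] at h2
          intro he
          rw [he] at h2
          omega
    · exfalso
      subst heq1
      have ep : beta1 β q s (q - s - 1) = β (q - 1) := by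
        rw [hb1a _ (by omega)]
        congr 1
        omega
      have e0 : beta1 β q s (q - s) = β q := by
        rw [hb1a _ le_rfl, show s + (q - s) = q by omega]
      rcases hc with ⟨⟨h1, h2⟩, _⟩ | ⟨_, hng⟩
      · rw [hprev (by omega), ep, e0] at h1
        omega
      · exact hng hgmax1
    · exfalso
      have ep : beta1 β q s (i - 1) = β q - (((i : ℤ) - 1) - ((q : ℤ) - (s : ℤ))) := by
        have hcast : ((i - 1 : ℕ) : ℤ) = (i : ℤ) - 1 := by omega
        rw [hb1c (i - 1) (by omega) (by omega), hcast]
      have e0 : beta1 β q s i = β q - ((i : ℤ) - ((q : ℤ) - (s : ℤ))) :=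
        hb1c i (by omega) hiN
      have en : beta1 β q s (i + 1) = β q - (((i : ℤ) + 1) - ((q : ℤ) - (s : ℤ))) := by
        by_cases hcase : i + 1 < N1
        · have hcast : ((i + 1 : ℕ) : ℤ) = (i : ℤ) + 1 := by push_cast; ring
          rw [hb1c (i + 1) (by omega) hcase, hcast]
        · rw [show i + 1 = 0 + N1 by omega, hb1per, hb1a 0 (by omega), Nat.add_zero]
          omega
      rcases hc with ⟨⟨h1, h2⟩, _⟩ | ⟨⟨h1, h2⟩, _⟩
      · rw [en, e0] at h2
        omega
      · rw [hprev (by omega), ep, e0] at h1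
        omega
  -- evaluation lemmas for beta2
  have hb2up : ∀ j, j ≤ s + m → beta2 β n q s j = β 0 + j := by
    intro j hj
    simp only [beta2]
    rw [← hm, ← hN2, Nat.mod_eq_of_lt (by omega)]
    by_cases h : j ≤ s
    · rw [if_pos h]
      exact hQval j h
    · rw [if_neg h, if_pos hj]
      omega
  have hb2dn : ∀ j, s + m ≤ j → j < N2 →
      beta2 β n q s j = β q - ((j : ℤ) - ((s : ℤ) + (m : ℤ))) := by
    intro j h1 h2
    rcases eq_or_lt_of_le h1 with h | h
    · rw [hb2up j (by omega)]
      omega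
    · simp only [beta2]
      rw [← hm, ← hN2, Nat.mod_eq_of_lt h2, if_neg (by omega), if_neg (by omega)]
      rw [hPval (j - (s + m)) (by omega)]
      omega
  have hb2per : ∀ j, beta2 β n q s (j + N2) = beta2 β n q s j := by
    intro j
    simp only [beta2]
    rw [← hm, ← hN2, Nat.add_mod_right]
  have hb2bd : ∀ j, β 0 ≤ beta2 β n q s j ∧ beta2 β n q s j ≤ β q := by
    intro j
    have hj : j % N2 < N2 := Nat.mod_lt _ (by omega)
    have e : beta2 β n q s j = beta2 β n q s (j % N2) := by
      simp only [beta2]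
      rw [← hm, ← hN2, Nat.mod_mod_of_dvd j dvd_rfl]
    by_cases h : j % N2 ≤ s + m
    · rw [e, hb2up _ h]
      constructor
      · omega
      · omega
    · rw [e, hb2dn _ (by omega) hj]
      constructor
      · omega
      · omega
  -- beta2 has no counted indices
  have hkey2 : ∀ i, i < N2 →
      ¬ ((LocMin (beta2 β n q s) N2 i ∧ ¬ GlobMin (beta2 β n q s) i) ∨
        (LocMax (beta2 β n q s) N2 i ∧ ¬ GlobMax (beta2 β n q s) i)) := by
    intro i hiN hc
    have hprev : 1 ≤ i → beta2 β n q s (i + (N2 - 1)) = beta2 β n q s (i - 1) := by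
      intro hi
      rw [show i + (N2 - 1) = (i - 1) + N2 by omega, hb2per]
    rcases Nat.eq_zero_or_pos i with h0 | h0
    · subst h0
      have e1 : beta2 β n q s (0 + 1) = β 0 + 1 := by
        rw [zero_add, hb2up 1 (by omega)]
        norm_num
      have e0 : beta2 β n q s 0 = β 0 := by
        rw [hb2up 0 (by omega)]
        norm_num
      rcases hc with ⟨_, hng⟩ | ⟨⟨_, h2⟩, _⟩
      · exact hng (fun j => by rw [e0]; exact (hb2bd j).1)
      · rw [e1, e0] at h2
        omega
    rcases lt_trichotomy i (s + m) with hlt1 | heq1 | hgt1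
    · have ep : beta2 β n q s (i - 1) = β 0 + ((i : ℤ) - 1) := by
        rw [hb2up _ (by omega)]
        omega
      have e0 : beta2 β n q s i = β 0 + i := hb2up i (by omega)
      have en : beta2 β n q s (i + 1) = β 0 + ((i : ℤ) + 1) := by
        rw [hb2up _ (by omega)]
        push_cast
        ring
      rcases hc with ⟨⟨h1, h2⟩, _⟩ | ⟨⟨h1, h2⟩, _⟩
      · rw [hprev h0, ep, e0] at h1
        omega
      · rw [en, e0] at h2
        omega
    · subst heq1
      have ep : beta2 β n q s (s + m - 1) = β 0 + ((s : ℤ) + (m : ℤ) - 1) := by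
        rw [hb2up _ (by omega)]
        omega
      have e0 : beta2 β n q s (s + m) = β q := by
        rw [hb2up _ le_rfl]
        omega
      rcases hc with ⟨⟨h1, h2⟩, _⟩ | ⟨_, hng⟩
      · rw [hprev (by omega), ep, e0] at h1
        omega
      · exact hng (fun j => by rw [e0]; exact (hb2bd j).2)
    · have ep : beta2 β n q s (i - 1) = β q - (((i : ℤ) - 1) - ((s : ℤ) + (m : ℤ))) := by
        have hcast : ((i - 1 : ℕ) : ℤ) = (i : ℤ) - 1 := by omega
        rw [hb2dn _ (by omega) (by omega), hcast]
      have e0 : beta2 β n q s i = β q - ((i : ℤ) - ((s : ℤ) + (m : ℤ))) :=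
        hb2dn i (by omega) hiN
      have en : beta2 β n q s (i + 1) = β q - (((i : ℤ) + 1) - ((s : ℤ) + (m : ℤ))) := by
        by_cases hcase : i + 1 < N2
        · have hcast : ((i + 1 : ℕ) : ℤ) = (i : ℤ) + 1 := by push_cast; ring
          rw [hb2dn _ (by omega) hcase, hcast]
        · rw [show i + 1 = 0 + N2 by omega, hb2per, hb2up 0 (by omega)]
          omega
      rcases hc with ⟨⟨h1, h2⟩, _⟩ | ⟨⟨h1, h2⟩, _⟩
      · rw [en, e0] at h2
        omega
      · rw [hprev (by omega), ep, e0] at h1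
        omega
  -- the counting
  have h2zero : nFace (beta2 β n q s) N2 = 0 := by
    haveI : IsEmpty {i : ℕ // i < N2 ∧
        ((LocMin (beta2 β n q s) N2 i ∧ ¬ GlobMin (beta2 β n q s) i) ∨
          (LocMax (beta2 β n q s) N2 i ∧ ¬ GlobMax (beta2 β n q s) i))} :=
      ⟨fun x => hkey2 x.1 x.2.1 x.2.2⟩
    exact Nat.card_of_isEmpty
  have ht₀n : t₀ < n := by omega
  have ht₀mem : t₀ ∈ {i : ℕ | i < n ∧ ((LocMin β n i ∧ ¬ GlobMin β i) ∨
      (LocMax β n i ∧ ¬ GlobMax β i))} := by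
    refine ⟨ht₀n, Or.inl ⟨⟨?_, ht₀r⟩, ?_⟩⟩
    · rw [hper' t₀ (by omega)]
      exact ht₀l
    · intro hg
      have := hminlt t₀ ht₀n (by omega)
      have := hg 0
      omega
  have e1 : nFace (beta1 β q s) N1 =
      ({i : ℕ | i < N1 ∧ ((LocMin (beta1 β q s) N1 i ∧ ¬ GlobMin (beta1 β q s) i) ∨
        (LocMax (beta1 β q s) N1 i ∧ ¬ GlobMax (beta1 β q s) i))} : Set ℕ).ncard :=
    Nat.card_coe_set_eq _
  have eb : nFace β n =
      ({i : ℕ | i < n ∧ ((LocMin β n i ∧ ¬ GlobMin β i) ∨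
        (LocMax β n i ∧ ¬ GlobMax β i))} : Set ℕ).ncard :=
    Nat.card_coe_set_eq _
  set S1 : Set ℕ := {i : ℕ | i < N1 ∧
    ((LocMin (beta1 β q s) N1 i ∧ ¬ GlobMin (beta1 β q s) i) ∨
      (LocMax (beta1 β q s) N1 i ∧ ¬ GlobMax (beta1 β q s) i))} with hS1
  set Sb : Set ℕ := {i : ℕ | i < n ∧ ((LocMin β n i ∧ ¬ GlobMin β i) ∨
    (LocMax β n i ∧ ¬ GlobMax β i))} with hSb
  have hsub : insert t₀ ((fun i => s + i) '' S1) ⊆ Sb := by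
    intro x hx
    rcases Set.mem_insert_iff.mp hx with rfl | hx'
    · exact ht₀mem
    · obtain ⟨i, hi, rfl⟩ := hx'
      exact (hkey1 i hi.1 hi.2).2.2.1
  have hnotmem : t₀ ∉ (fun i => s + i) '' S1 := by
    rintro ⟨i, hi, he⟩
    exact (hkey1 i hi.1 hi.2).2.2.2 he
  have hfinb : Sb.Finite := (Set.finite_Iio n).subset (fun x hx => hx.1)
  have hfin1 : S1.Finite := (Set.finite_Iio N1).subset (fun x hx => hx.1)
  have c1 : ((fun i => s + i) '' S1).ncard = S1.ncard :=
    Set.ncard_image_of_injective _ (fun a b h => by omega)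
  have c2 : (insert t₀ ((fun i => s + i) '' S1)).ncard = S1.ncard + 1 := by
    rw [Set.ncard_insert_of_notMem hnotmem (hfin1.image _), c1]
  have c3 : (insert t₀ ((fun i => s + i) '' S1)).ncard ≤ Sb.ncard :=
    Set.ncard_le_ncard hsub hfinb
  rw [e1, eb, h2zero]
  omega
end
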